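/- arXiv:1502.00241 — 4 statements merged into one kernel-verified Lean document; each statement's English description precedes it below -/
import Mathlib

section
/- If C₁ and C₂ are distinct points in the region S_C = {(x,y) : y ≥ 0, x ≥ 1/2, x² + y² ≤ 1}, then the triangles with vertices (0,0), (1,0), C₁ and (0,0), (1,0), C₂ are not similar. -/
open Real EuclideanGeometry

/-- A point of the Euclidean plane given by Cartesian coordinates. -/
noncomputable def pt (x y : ℝ) : EuclideanSpace ℝ (Fin 2) := WithLp.toLp 2 ![x, y]

/-- A plane similarity transformation: a map multiplying all distances by a
fixed positive ratio (equivalently, a composition of translations, rotations,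
reflections and dilations). -/
def IsPlaneSimilarity (f : EuclideanSpace ℝ (Fin 2) → EuclideanSpace ℝ (Fin 2)) : Prop :=
  ∃ r : ℝ, 0 < r ∧ ∀ p q, dist (f p) (f q) = r * dist p q

/-!
For `C` in the region, `AB = 1` is the longest side of `ABC` and `BC ≤ AC`. A similarity of
ratio `r` multiplies the multiset of pairwise distances of the vertices by `r`; as both
triangles have longest side `1`, this forces `r = 1`, so the two multisets agree. Comparing
their sums and sums of squares, and using `BC ≤ AC`, gives `AC₁ = AC₂` and `BC₁ = BC₂`; a
point of the upper half-plane is determined by its distances to `A` and `B`.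
-/

lemma eq_one_of_map_mul_eq {s t : Multiset ℝ} {r d : ℝ} (hr : 0 ≤ r) (hd : 0 < d)
    (hs : IsGreatest {x | x ∈ s} d) (ht : IsGreatest {x | x ∈ t} d)
    (h : t = s.map (r * ·)) : r = 1 := by
  obtain ⟨x, hx, hxd⟩ := Multiset.mem_map.1 (h ▸ ht.1)
  have hrd : r * d ∈ t := h ▸ Multiset.mem_map_of_mem _ hs.1
  have h1 : d ≤ r * d := hxd.symm.trans_le (mul_le_mul_of_nonneg_left (hs.2 hx) hr)
  have h2 : r * d ≤ d := ht.2 hrd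
  nlinarith

lemma eq_and_eq_of_add_eq_of_sq_add_sq_eq {a₁ b₁ a₂ b₂ : ℝ} (h₁ : a₁ ≤ b₁) (h₂ : a₂ ≤ b₂)
    (hsum : a₁ + b₁ = a₂ + b₂) (hsq : a₁ ^ 2 + b₁ ^ 2 = a₂ ^ 2 + b₂ ^ 2) :
    a₁ = a₂ ∧ b₁ = b₂ := by
  have hgap : (b₁ - a₁) ^ 2 = (b₂ - a₂) ^ 2 := by
    linear_combination 2 * hsq - (a₁ + b₁ + a₂ + b₂) * hsum
  have := (pow_left_inj₀ (sub_nonneg.2 h₁) (sub_nonneg.2 h₂) two_ne_zero).1 hgap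
  constructor <;> linarith

section PairwiseDist

variable {P : Type*} [PseudoMetricSpace P]

def pairwiseDist (S : Multiset P) : Multiset ℝ := S.bind fun p ↦ S.map (dist p)

lemma mem_pairwiseDist {S : Multiset P} {x : ℝ} :
    x ∈ pairwiseDist S ↔ ∃ p ∈ S, ∃ q ∈ S, dist p q = x := by
  simp [pairwiseDist]

lemma pairwiseDist_map {f : P → P} {r : ℝ} (hf : ∀ p q, dist (f p) (f q) = r * dist p q)
    (S : Multiset P) : pairwiseDist (S.map f) = (pairwiseDist S).map (r * ·) := by
  simp [pairwiseDist, Multiset.bind_map, Multiset.map_bind, Multiset.map_map, hf]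

lemma sum_map_pairwiseDist_triple (g : ℝ → ℝ) (a b c : P) :
    ((pairwiseDist {a, b, c}).map g).sum =
      3 * g 0 + 2 * (g (dist a b) + g (dist b c) + g (dist a c)) := by
  simp only [pairwiseDist, Multiset.insert_eq_cons, Multiset.map_cons, Multiset.map_singleton,
    Multiset.bind_cons, Multiset.bind_singleton, Multiset.add_cons, Multiset.cons_add,
    Multiset.singleton_add, Multiset.sum_cons, Multiset.sum_singleton, dist_self, dist_comm]
  ring

lemma isGreatest_pairwiseDist_triple {a b c : P} (hbc : dist b c ≤ dist a b)
    (hac : dist a c ≤ dist a b) :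
    IsGreatest {x | x ∈ pairwiseDist {a, b, c}} (dist a b) := by
  refine ⟨(mem_pairwiseDist (S := {a, b, c})).2 ⟨a, by simp, b, by simp, rfl⟩, ?_⟩
  intro x hx
  obtain ⟨p, hp, q, hq, rfl⟩ := (mem_pairwiseDist (S := {a, b, c})).1 hx
  simp only [Multiset.insert_eq_cons, Multiset.mem_cons, Multiset.mem_singleton] at hp hq
  have hpq := dist_comm p q
  have hpp := dist_self p
  have hab := dist_nonneg (x := a) (y := b)
  rcases hp with rfl | rfl | rfl <;> rcases hq with rfl | rfl | rfl <;> linarith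

lemma dist_eq_of_pairwiseDist_triple_eq {a b c c' : P}
    (h : pairwiseDist {a, b, c} = pairwiseDist {a, b, c'})
    (hc : dist b c ≤ dist a c) (hc' : dist b c' ≤ dist a c') :
    dist b c = dist b c' ∧ dist a c = dist a c' := by
  have hsum := congrArg (fun s ↦ (s.map id).sum) h
  have hsq := congrArg (fun s ↦ (s.map (· ^ 2)).sum) h
  simp only [sum_map_pairwiseDist_triple, id] at hsum hsq
  exact eq_and_eq_of_add_eq_of_sq_add_sq_eq hc hc' (by linarith) (by linarith)

end PairwiseDist

@[simp] lemma pt_apply_zero (x y : ℝ) : pt x y 0 = x := rfl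

@[simp] lemma pt_apply_one (x y : ℝ) : pt x y 1 = y := rfl

lemma dist_pt_sq (x y : ℝ) (C : EuclideanSpace ℝ (Fin 2)) :
    dist (pt x y) C ^ 2 = (x - C 0) ^ 2 + (y - C 1) ^ 2 := by
  rw [EuclideanSpace.dist_eq, sq_sqrt (by positivity)]
  simp [Fin.sum_univ_two, Real.dist_eq, sq_abs]

lemma dist_pt_zero_pt_one : dist (pt 0 0) (pt 1 0) = 1 := by
  refine (pow_left_inj₀ dist_nonneg zero_le_one two_ne_zero).1 ?_
  simp [dist_pt_sq]

lemma dist_le_of_half_le_of_sq_add_sq_le {C : EuclideanSpace ℝ (Fin 2)} (hx : 1 / 2 ≤ C 0)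
    (hC : C 0 ^ 2 + C 1 ^ 2 ≤ 1) :
    dist (pt 1 0) C ≤ dist (pt 0 0) C ∧ dist (pt 0 0) C ≤ dist (pt 0 0) (pt 1 0) := by
  constructor <;> refine (pow_le_pow_iff_left₀ dist_nonneg dist_nonneg two_ne_zero).1 ?_ <;>
    simp only [dist_pt_sq, pt_apply_zero, pt_apply_one] <;> nlinarith

lemma eq_of_dist_pt_eq {C C' : EuclideanSpace ℝ (Fin 2)} (hC : 0 ≤ C 1) (hC' : 0 ≤ C' 1)
    (h₀ : dist (pt 0 0) C = dist (pt 0 0) C') (h₁ : dist (pt 1 0) C = dist (pt 1 0) C') :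
    C = C' := by
  have e₀ := congrArg (· ^ 2) h₀
  have e₁ := congrArg (· ^ 2) h₁
  simp only [dist_pt_sq] at e₀ e₁
  have hx : C 0 = C' 0 := by linear_combination (e₀ - e₁) / 2
  have hy : C 1 = C' 1 := by
    refine (pow_left_inj₀ hC hC' two_ne_zero).1 ?_
    linear_combination e₀ - (C 0 + C' 0) * hx
  ext i
  fin_cases i
  exacts [hx, hy]

/-- Distinct points of S_C give non-similar triangles on the base (0,0)-(1,0). -/
theorem stmt1 (C₁ C₂ : EuclideanSpace ℝ (Fin 2))
    (h₁ : 0 ≤ C₁ 1 ∧ 1/2 ≤ C₁ 0 ∧ (C₁ 0)^2 + (C₁ 1)^2 ≤ 1)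
    (h₂ : 0 ≤ C₂ 1 ∧ 1/2 ≤ C₂ 0 ∧ (C₂ 0)^2 + (C₂ 1)^2 ≤ 1)
    (hne : C₁ ≠ C₂) :
    ¬ ∃ f : EuclideanSpace ℝ (Fin 2) → EuclideanSpace ℝ (Fin 2),
        IsPlaneSimilarity f ∧
        Multiset.map f {pt 0 0, pt 1 0, C₁} = ({pt 0 0, pt 1 0, C₂} : Multiset (EuclideanSpace ℝ (Fin 2))) := by
  rintro ⟨f, ⟨r, hr, hf⟩, hmap⟩
  obtain ⟨hBC₁, hAC₁⟩ := dist_le_of_half_le_of_sq_add_sq_le h₁.2.1 h₁.2.2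
  obtain ⟨hBC₂, hAC₂⟩ := dist_le_of_half_le_of_sq_add_sq_le h₂.2.1 h₂.2.2
  have hscale : pairwiseDist {pt 0 0, pt 1 0, C₂} =
      (pairwiseDist {pt 0 0, pt 1 0, C₁}).map (r * ·) := hmap ▸ pairwiseDist_map hf _
  have hr1 : r = 1 := eq_one_of_map_mul_eq hr.le (by rw [dist_pt_zero_pt_one]; exact one_pos)
    (isGreatest_pairwiseDist_triple (hBC₁.trans hAC₁) hAC₁)
    (isGreatest_pairwiseDist_triple (hBC₂.trans hAC₂) hAC₂) hscale
  subst hr1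
  simp only [one_mul, Multiset.map_id'] at hscale
  obtain ⟨hB, hA⟩ := dist_eq_of_pairwiseDist_triple_eq hscale.symm hBC₁ hBC₂
  exact hne (eq_of_dist_pt_eq h₁.1 h₂.1 hA hB)
end

section
/- If a triangle has side lengths a ≤ b ≤ c with c > 0, then its C-normal point is ((−a² + b² + c²)/(2c²), √(−a⁴ − b⁴ − c⁴ + 2(a²b² + a²c² + b²c²))/(2c²)), i.e., the triangle with vertices (0,0), (1,0) and this point has side lengths a/c, b/c, 1 and lies in S_C. -/
open Real EuclideanGeometry

/-!
With `x = (b² + c² - a²) / (2c²)` and `Q = -a⁴ - b⁴ - c⁴ + 2(a²b² + a²c² + b²c²)`, the law of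
cosines in the form `Q = (2bc)² - (b² + c² - a²)² = (2ac)² - (a² + c² - b²)²` turns the squared
distances from `(x, √Q / (2c²))` to `(0,0)` and `(1,0)` into `(b/c)²` and `(a/c)²`. Heron's
factorisation `Q = (a+b+c)(-a+b+c)(a-b+c)(a+b-c)` gives `Q ≥ 0`, and the point lies in `S_C`
since `x ≥ 1/2` amounts to `a ≤ b` and its distance `b/c` to the origin is at most `1`.
-/

lemma dist_pt (x₁ y₁ x₂ y₂ : ℝ) :
    dist (pt x₁ y₁) (pt x₂ y₂) = √((x₁ - x₂) ^ 2 + (y₁ - y₂) ^ 2) := by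
  rw [EuclideanSpace.dist_eq, Fin.sum_univ_two]
  simp [pt, Real.dist_eq]

lemma dist_pt_zero_zero (x y : ℝ) : dist (pt 0 0) (pt x y) = √(x ^ 2 + y ^ 2) := by
  simp [dist_pt]

lemma dist_pt_one_zero (x y : ℝ) : dist (pt 1 0) (pt x y) = √((1 - x) ^ 2 + y ^ 2) := by
  simp [dist_pt]

section Triangle

variable {a b c : ℝ}

lemma heron_quartic_nonneg (ha : a ≤ b + c) (hb : b ≤ a + c) (hc : c ≤ a + b) :
    0 ≤ -a^4 - b^4 - c^4 + 2*(a^2*b^2 + a^2*c^2 + b^2*c^2) := by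
  have heron : -a^4 - b^4 - c^4 + 2*(a^2*b^2 + a^2*c^2 + b^2*c^2) =
      (a + b + c) * (-a + b + c) * (a - b + c) * (a + b - c) := by ring
  rw [heron]
  have : 0 ≤ a + b + c := by linarith
  have : 0 ≤ -a + b + c := by linarith
  have : 0 ≤ a - b + c := by linarith
  have : 0 ≤ a + b - c := by linarith
  positivity

variable (hc : c ≠ 0) (hQ : 0 ≤ -a^4 - b^4 - c^4 + 2*(a^2*b^2 + a^2*c^2 + b^2*c^2))
include hc hQ

lemma normalPoint_sq_add_sq :
    ((-a^2 + b^2 + c^2) / (2*c^2)) ^ 2 +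
      (√(-a^4 - b^4 - c^4 + 2*(a^2*b^2 + a^2*c^2 + b^2*c^2)) / (2*c^2)) ^ 2 = (b / c) ^ 2 := by
  rw [div_pow (√_), sq_sqrt hQ]
  field_simp
  ring

lemma one_sub_normalPoint_sq_add_sq :
    (1 - (-a^2 + b^2 + c^2) / (2*c^2)) ^ 2 +
      (√(-a^4 - b^4 - c^4 + 2*(a^2*b^2 + a^2*c^2 + b^2*c^2)) / (2*c^2)) ^ 2 = (a / c) ^ 2 := by
  rw [div_pow (√_), sq_sqrt hQ]
  field_simp
  ring

end Triangle

lemma one_half_le_normalPoint_fst {a b c : ℝ} (hc : c ≠ 0) (hab : a ^ 2 ≤ b ^ 2) :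
    1/2 ≤ (-a^2 + b^2 + c^2) / (2*c^2) := by
  rw [le_div_iff₀ (by positivity)]
  linarith

/-- Formula for the C-normal point of a triangle with side lengths a ≤ b ≤ c. -/
theorem stmt9 (a b c : ℝ) (ha : 0 ≤ a) (hab : a ≤ b) (hbc : b ≤ c) (hc : 0 < c)
    (htri : c ≤ a + b) :
    dist (pt 0 0) (pt 1 0) = 1 ∧
    dist (pt 0 0) (pt ((-a^2 + b^2 + c^2) / (2*c^2))
      (Real.sqrt (-a^4 - b^4 - c^4 + 2*(a^2*b^2 + a^2*c^2 + b^2*c^2)) / (2*c^2))) = b / c ∧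
    dist (pt 1 0) (pt ((-a^2 + b^2 + c^2) / (2*c^2))
      (Real.sqrt (-a^4 - b^4 - c^4 + 2*(a^2*b^2 + a^2*c^2 + b^2*c^2)) / (2*c^2))) = a / c ∧
    0 ≤ Real.sqrt (-a^4 - b^4 - c^4 + 2*(a^2*b^2 + a^2*c^2 + b^2*c^2)) / (2*c^2) ∧
    1/2 ≤ (-a^2 + b^2 + c^2) / (2*c^2) ∧
    ((-a^2 + b^2 + c^2) / (2*c^2))^2 +
      (Real.sqrt (-a^4 - b^4 - c^4 + 2*(a^2*b^2 + a^2*c^2 + b^2*c^2)) / (2*c^2))^2 ≤ 1 := by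
  have hb : 0 ≤ b := ha.trans hab
  have hQ := heron_quartic_nonneg (by linarith) (by linarith) htri
  refine ⟨by simp [dist_pt], ?_, ?_, by positivity,
    one_half_le_normalPoint_fst hc.ne' (pow_le_pow_left₀ ha hab 2), ?_⟩
  · rw [dist_pt_zero_zero, normalPoint_sq_add_sq hc.ne' hQ, sqrt_sq (by positivity)]
  · rw [dist_pt_one_zero, one_sub_normalPoint_sq_add_sq hc.ne' hQ, sqrt_sq (by positivity)]
  · rw [normalPoint_sq_add_sq hc.ne' hQ]
    exact pow_le_one₀ (by positivity) ((div_le_one hc).mpr hbc)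
end

section
/- Let triangles T₁ = (A₁, B₁, C) and T₂ = (A₂, B₂, C) be normal circle triangles with C = (1,0), Aᵢ = (cos 2βᵢ, sin 2βᵢ), Bᵢ = (cos 2αᵢ, −sin 2αᵢ), where 0 < αᵢ ≤ π/3 and αᵢ ≤ βᵢ ≤ π/2 − αᵢ/2. If (A₁, B₁) ≠ (A₂, B₂), then T₁ and T₂ are not similar. -/
/-!
The vertices lie on the unit circle, so the sides are chords of lengths `2 sin α`, `2 sin β`,
`2 sin (α + β)`, increasing for normal angles. A similarity of ratio `r` multiplies the multiset of
pairwise distances by `r`, so after sorting the sides of the image are `r` times the sides of the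
original. Chords of the unit circle satisfy `16·Area² = a²b²c²` (that is, `abc = 4R·Area` with
`R = 1`), whose two sides have degrees 4 and 6; this forces `r = 1`. Then `sin α` and `sin β`
coincide, and `sin` is injective on `[-π/2, π/2]`.
-/

open Real EuclideanGeometry

section PairwiseDists

variable {P Q : Type*} [PseudoMetricSpace P] [PseudoMetricSpace Q]

/-- Diagonal pairs are included, contributing one `0` per point. -/
def pairwiseDists (s : Multiset P) : Multiset ℝ :=
  s.sym2.map (Sym2.lift ⟨dist, dist_comm⟩)

lemma pairwiseDists_map {f : P → Q} {r : ℝ} (hf : ∀ p q, dist (f p) (f q) = r * dist p q)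
    (s : Multiset P) : pairwiseDists (s.map f) = (pairwiseDists s).map (r * ·) := by
  simp only [pairwiseDists, Multiset.sym2_map, Multiset.map_map]
  congr 1
  ext ⟨p, q⟩
  simp [hf]

lemma pairwiseDists_triple (x y z : P) :
    pairwiseDists {x, y, z} = {0, 0, 0, dist y z, dist x z, dist x y} := by
  change Multiset.map _ (Multiset.sym2 (Multiset.ofList [x, y, z])) =
    Multiset.ofList [0, 0, 0, dist y z, dist x z, dist x y]
  simp only [Multiset.sym2_coe, List.sym2, List.map, Multiset.map_coe, Multiset.coe_eq_coe,
    List.cons_append, List.nil_append, List.append_nil, Sym2.lift_mk, dist_self]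
  grind

end PairwiseDists

lemma Multiset.sort_triple {α : Type*} [LinearOrder α] {a b c : α} (hab : a ≤ b) (hbc : b ≤ c) :
    Multiset.sort {a, b, c} = [a, b, c] := by
  rw [Multiset.insert_eq_cons, Multiset.sort_cons, Multiset.insert_eq_cons, Multiset.sort_cons,
    Multiset.sort_singleton] <;> simp [*, hab.trans hbc]

lemma eq_of_triple_eq_of_le {α : Type*} [LinearOrder α] {a b c a' b' c' : α}
    (h : ({a, b, c} : Multiset α) = {a', b', c'}) (hab : a ≤ b) (hbc : b ≤ c)
    (hab' : a' ≤ b') (hbc' : b' ≤ c') : a = a' ∧ b = b' ∧ c = c' := by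
  have hs := congrArg Multiset.sort h
  rw [Multiset.sort_triple hab hbc, Multiset.sort_triple hab' hbc'] at hs
  simpa using hs

lemma dist_pt_s14 (x y x' y' : ℝ) :
    dist (pt x y) (pt x' y') = √((x - x') ^ 2 + (y - y') ^ 2) := by
  simp [pt, EuclideanSpace.dist_eq, Fin.sum_univ_two, Real.dist_eq, sq_abs]

lemma dist_pt_cos_sin (s t : ℝ) :
    dist (pt (cos s) (sin s)) (pt (cos t) (sin t)) = 2 * |sin ((s - t) / 2)| := by
  have hsq : (cos s - cos t) ^ 2 + (sin s - sin t) ^ 2 = (2 * sin ((s - t) / 2)) ^ 2 := by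
    have h := cos_two_mul' ((s - t) / 2)
    rw [show 2 * ((s - t) / 2) = s - t by ring] at h
    linear_combination sin_sq_add_cos_sq s + sin_sq_add_cos_sq t + 2 * cos_sub s t - 2 * h
      - 2 * sin_sq_add_cos_sq ((s - t) / 2)
  rw [dist_pt_s14, hsq, sqrt_sq_eq_abs, abs_mul, abs_two]

/-- Sixteen times the squared area of a triangle with sides `a`, `b`, `c` (Heron). -/
def heron (a b c : ℝ) : ℝ :=
  2 * a ^ 2 * b ^ 2 + 2 * b ^ 2 * c ^ 2 + 2 * c ^ 2 * a ^ 2 - a ^ 4 - b ^ 4 - c ^ 4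

lemma heron_mul (r a b c : ℝ) : heron (r * a) (r * b) (r * c) = r ^ 4 * heron a b c := by
  unfold heron
  ring

-- `abc = 4R·Area` for a triangle inscribed in the unit circle.
lemma heron_two_mul_sin (α β : ℝ) :
    heron (2 * sin α) (2 * sin β) (2 * sin (α + β)) =
      (2 * sin α) ^ 2 * (2 * sin β) ^ 2 * (2 * sin (α + β)) ^ 2 := by
  rw [heron, sin_add]
  linear_combination 16 * (
    (sin β ^ 4 - cos α ^ 2 * sin β ^ 4 - 4 * sin α * cos α * sin β ^ 3 * cos β
      + 2 * sin α ^ 2 * sin β ^ 2 - 6 * sin α ^ 2 * sin β ^ 2 * cos β ^ 2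
      - 3 * sin α ^ 2 * sin β ^ 4) * sin_sq_add_cos_sq α
    + (-4 * sin α ^ 2 * sin β ^ 2 - 4 * sin α ^ 3 * cos α * sin β * cos β + sin α ^ 4
      - sin α ^ 4 * cos β ^ 2 + 3 * sin α ^ 4 * sin β ^ 2) * sin_sq_add_cos_sq β)

lemma eq_one_of_heron_eq {r a b c : ℝ} (hr : 0 < r) (ha : a ≠ 0) (hb : b ≠ 0) (hc : c ≠ 0)
    (h : heron a b c = a ^ 2 * b ^ 2 * c ^ 2)
    (h' : heron (r * a) (r * b) (r * c) = (r * a) ^ 2 * (r * b) ^ 2 * (r * c) ^ 2) : r = 1 := by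
  rw [heron_mul, h] at h'
  have hr2 : r ^ 2 = 1 := by
    have hprod : r ^ 4 * (a ^ 2 * b ^ 2 * c ^ 2) * (r ^ 2 - 1) = 0 := by linear_combination -h'
    have hne : r ^ 4 * (a ^ 2 * b ^ 2 * c ^ 2) ≠ 0 := by positivity
    linear_combination (mul_eq_zero.mp hprod).resolve_left hne
  nlinarith

/-- Vertices `A`, `B`, `C` of the circle triangle with angles `α` at `A` and `β` at `B`. -/
noncomputable def circleTriangle (α β : ℝ) : Multiset (EuclideanSpace ℝ (Fin 2)) :=
  {pt (cos (2 * β)) (sin (2 * β)), pt (cos (2 * α)) (-sin (2 * α)), pt 1 0}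

def IsNormalAngles (α β : ℝ) : Prop :=
  0 < α ∧ α ≤ β ∧ β ≤ π / 2 - α / 2

namespace IsNormalAngles

variable {α β : ℝ}

lemma mem_Icc (h : IsNormalAngles α β) :
    α ∈ Set.Icc (-(π / 2)) (π / 2) ∧ β ∈ Set.Icc (-(π / 2)) (π / 2) := by
  obtain ⟨hα, hαβ, hβ⟩ := h
  exact ⟨⟨by linarith, by linarith⟩, ⟨by linarith, by linarith⟩⟩

lemma sin_le_sin (h : IsNormalAngles α β) : sin α ≤ sin β :=
  sin_le_sin_of_le_of_le_pi_div_two h.mem_Icc.1.1 h.mem_Icc.2.2 h.2.1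

lemma sin_le_sin_add (h : IsNormalAngles α β) : sin β ≤ sin (α + β) := by
  obtain ⟨hα, hαβ, hβ⟩ := h
  rcases le_or_gt (α + β) (π / 2) with hsum | hsum
  · exact sin_le_sin_of_le_of_le_pi_div_two (by linarith) hsum (by linarith)
  · rw [← sin_pi_sub (α + β)]
    exact sin_le_sin_of_le_of_le_pi_div_two (by linarith) (by linarith) (by linarith)

lemma pairwiseDists_circleTriangle (h : IsNormalAngles α β) :
    pairwiseDists (circleTriangle α β) = {0, 0, 0, 2 * sin α, 2 * sin β, 2 * sin (α + β)} := by
  obtain ⟨hα, hαβ, hβ⟩ := h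
  have hB : pt (cos (2 * α)) (-sin (2 * α)) = pt (cos (-(2 * α))) (sin (-(2 * α))) := by
    rw [cos_neg, sin_neg]
  have hC : pt 1 0 = pt (cos 0) (sin 0) := by rw [cos_zero, sin_zero]
  rw [circleTriangle, pairwiseDists_triple, hB, hC, dist_pt_cos_sin, dist_pt_cos_sin,
    dist_pt_cos_sin, show (-(2 * α) - 0) / 2 = -α by ring, show (2 * β - 0) / 2 = β by ring,
    show (2 * β - -(2 * α)) / 2 = α + β by ring, sin_neg, abs_neg,
    abs_of_pos (sin_pos_of_pos_of_lt_pi hα (by linarith)),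
    abs_of_pos (sin_pos_of_pos_of_lt_pi (by linarith) (by linarith)),
    abs_of_pos (sin_pos_of_pos_of_lt_pi (by linarith) (by linarith))]

lemma eq_of_pairwiseDists_eq_map {α' β' r : ℝ} (h : IsNormalAngles α β)
    (h' : IsNormalAngles α' β') (hr : 0 < r)
    (hd : pairwiseDists (circleTriangle α' β') = (pairwiseDists (circleTriangle α β)).map (r * ·)) :
    α' = α ∧ β' = β := by
  rw [h.pairwiseDists_circleTriangle, h'.pairwiseDists_circleTriangle] at hd
  simp only [Multiset.insert_eq_cons, Multiset.map_cons, Multiset.map_singleton, mul_zero,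
    Multiset.cons_inj_right] at hd
  have hmono {x y : ℝ} (hxy : sin x ≤ sin y) : r * (2 * sin x) ≤ r * (2 * sin y) := by gcongr
  obtain ⟨ha, hb, hc⟩ := eq_of_triple_eq_of_le hd
    (by linarith [h'.sin_le_sin]) (by linarith [h'.sin_le_sin_add])
    (hmono h.sin_le_sin) (hmono h.sin_le_sin_add)
  have hsinα : 0 < sin α := sin_pos_of_pos_of_lt_pi h.1 (by linarith [h.2.1, h.2.2, pi_pos])
  have hsinβ : 0 < sin β := hsinα.trans_le h.sin_le_sin
  have hr1 : r = 1 := by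
    refine eq_one_of_heron_eq hr (by positivity) (by positivity)
      (by linarith [h.sin_le_sin_add]) (heron_two_mul_sin α β) ?_
    rw [← ha, ← hb, ← hc]
    exact heron_two_mul_sin α' β'
  subst hr1
  exact ⟨injOn_sin h'.mem_Icc.1 h.mem_Icc.1 (by linarith),
    injOn_sin h'.mem_Icc.2 h.mem_Icc.2 (by linarith)⟩

end IsNormalAngles

/-- Distinct normal circle triangles are not similar. -/
theorem stmt14 (α₁ β₁ α₂ β₂ : ℝ)
    (h₁ : 0 < α₁ ∧ α₁ ≤ π/3 ∧ α₁ ≤ β₁ ∧ β₁ ≤ π/2 - α₁/2)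
    (h₂ : 0 < α₂ ∧ α₂ ≤ π/3 ∧ α₂ ≤ β₂ ∧ β₂ ≤ π/2 - α₂/2)
    (hne : (pt (Real.cos (2*β₁)) (Real.sin (2*β₁)), pt (Real.cos (2*α₁)) (-Real.sin (2*α₁))) ≠
           (pt (Real.cos (2*β₂)) (Real.sin (2*β₂)), pt (Real.cos (2*α₂)) (-Real.sin (2*α₂)))) :
    ¬ ∃ f : EuclideanSpace ℝ (Fin 2) → EuclideanSpace ℝ (Fin 2),
        IsPlaneSimilarity f ∧
        Multiset.map f {pt (Real.cos (2*β₁)) (Real.sin (2*β₁)),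
            pt (Real.cos (2*α₁)) (-Real.sin (2*α₁)), pt 1 0} =
          ({pt (Real.cos (2*β₂)) (Real.sin (2*β₂)),
            pt (Real.cos (2*α₂)) (-Real.sin (2*α₂)), pt 1 0} : Multiset (EuclideanSpace ℝ (Fin 2))) := by
  rintro ⟨f, ⟨r, hr, hf⟩, hmap⟩
  change (circleTriangle α₁ β₁).map f = circleTriangle α₂ β₂ at hmap
  have hd := pairwiseDists_map hf (circleTriangle α₁ β₁)
  rw [hmap] at hd
  obtain ⟨rfl, rfl⟩ := IsNormalAngles.eq_of_pairwiseDists_eq_map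
    ⟨h₁.1, h₁.2.2⟩ ⟨h₂.1, h₂.2.2⟩ hr hd
  exact hne rfl
end

section
/- Every multiset of four points in ℝ² containing at least two distinct points is similar (under plane similarity transformations) to a multiset {(0,0), (1,0), C, D} where C ∈ S_C, all six pairwise distances are at most 1, and D satisfies: |x_D − 1/2| ≤ |x_C − 1/2|, and if |x_D − 1/2| = |x_C − 1/2| then |y_D| ≤ |y_C|. -/
/-!
Identify the plane with `ℂ` and send a pair `A, B` of the four points at maximal distance to
`0, 1` by `z ↦ (z - A) / (B - A)`; this similarity divides all distances by `|B - A|`, so the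
image has diameter `1`. The reflections in the real axis and in the line `Re z = 1/2` fix the
multiset `{0, 1}` and preserve `(|Re z - 1/2|, |Im z|)`. Calling `C` the remaining point for which
this pair is lexicographically larger, one of these reflections (or their product) moves `C` to
`Re ≥ 1/2, Im ≥ 0`, and `|C| ≤ 1` puts it in `S_C`.
-/

open Real EuclideanGeometry

open ComplexConjugate

theorem Multiset.exists_eq_pair_add_forall_dist_le {E : Type*} [MetricSpace E] (s : Multiset E)
    (hs : ∃ x ∈ s, ∃ y ∈ s, x ≠ y) :
    ∃ a b t, s = {a, b} + t ∧ 0 < dist a b ∧ ∀ x ∈ s, ∀ y ∈ s, dist x y ≤ dist a b := by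
  classical
  obtain ⟨x, hx, y, hy, hxy⟩ := hs
  obtain ⟨⟨a, b⟩, hab, hmax⟩ := (s.toFinset ×ˢ s.toFinset).exists_max_image
    (fun p => dist p.1 p.2) ⟨(x, x), by simp [hx]⟩
  simp only [Finset.mem_product, Multiset.mem_toFinset] at hab
  have hdiam : ∀ x ∈ s, ∀ y ∈ s, dist x y ≤ dist a b := fun x hx y hy =>
    hmax (x, y) (by simp [hx, hy])
  have hpos : 0 < dist a b := (dist_pos.2 hxy).trans_le (hdiam x hx y hy)
  refine ⟨a, b, (s.erase a).erase b, ?_, hpos, hdiam⟩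
  have hb : b ∈ s.erase a := (Multiset.mem_erase_of_ne (dist_pos.1 hpos).symm).2 hab.2
  simp [Multiset.insert_eq_cons, Multiset.cons_erase hb, Multiset.cons_erase hab.1]

lemma Multiset.dist_le_of_mem_map {E F : Type*} [PseudoMetricSpace E] [PseudoMetricSpace F]
    {f : E → F} {r M : ℝ} (hf : ∀ p q, dist (f p) (f q) = r * dist p q) (hr : 0 ≤ r)
    {s : Multiset E} (hs : ∀ x ∈ s, ∀ y ∈ s, dist x y ≤ M) :
    ∀ x ∈ s.map f, ∀ y ∈ s.map f, dist x y ≤ r * M := by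
  simp only [Multiset.mem_map]
  rintro _ ⟨x, hx, rfl⟩ _ ⟨y, hy, rfl⟩
  rw [hf]
  exact mul_le_mul_of_nonneg_left (hs x hx y hy) hr

noncomputable def foldKey (z : ℂ) : ℝ ×ₗ ℝ := toLex (|z.re - 1 / 2|, |z.im|)

lemma foldKey_le_foldKey_iff {z w : ℂ} :
    foldKey w ≤ foldKey z ↔
      |w.re - 1 / 2| ≤ |z.re - 1 / 2| ∧ (|w.re - 1 / 2| = |z.re - 1 / 2| → |w.im| ≤ |z.im|) :=
  Prod.Lex.toLex_le_toLex'

-- `foldKey` invariance follows from the other two fields; it is recorded as the property used.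
structure IsUnitSegmentSymmetry (g : ℂ → ℂ) : Prop where
  isometry : Isometry g
  map_zero_one : Multiset.map g {0, 1} = {0, 1}
  foldKey_apply : ∀ z, foldKey (g z) = foldKey z

namespace IsUnitSegmentSymmetry

lemma id : IsUnitSegmentSymmetry _root_.id := ⟨isometry_id, by simp, fun _ => rfl⟩

lemma comp {g h : ℂ → ℂ} (hg : IsUnitSegmentSymmetry g) (hh : IsUnitSegmentSymmetry h) :
    IsUnitSegmentSymmetry (g ∘ h) :=
  ⟨hg.isometry.comp hh.isometry, by rw [← Multiset.map_map, hh.map_zero_one, hg.map_zero_one],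
    fun z => (hg.foldKey_apply _).trans (hh.foldKey_apply z)⟩

end IsUnitSegmentSymmetry

lemma isUnitSegmentSymmetry_conj : IsUnitSegmentSymmetry (conj : ℂ → ℂ) :=
  ⟨Complex.isometry_conj, by simp, fun z => by simp [foldKey]⟩

lemma isUnitSegmentSymmetry_one_sub_conj : IsUnitSegmentSymmetry (fun z => 1 - conj z) := by
  refine ⟨Isometry.of_dist_eq fun z w => ?_, ?_, fun z => ?_⟩
  · rw [dist_eq_norm, sub_sub_sub_cancel_left, ← map_sub, Complex.norm_conj, dist_eq_norm']
  · simpa using Multiset.pair_comm (1 : ℂ) 0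
  · simp only [foldKey, Complex.sub_re, Complex.one_re, Complex.conj_re, Complex.sub_im,
      Complex.one_im, Complex.conj_im, zero_sub, abs_neg]
    rw [show 1 - z.re - 1 / 2 = -(z.re - 1 / 2) by ring, abs_neg]

lemma exists_isUnitSegmentSymmetry_mem_quadrant (c : ℂ) :
    ∃ g, IsUnitSegmentSymmetry g ∧ 1 / 2 ≤ (g c).re ∧ 0 ≤ (g c).im := by
  obtain ⟨g, hg, hre, him⟩ : ∃ g, IsUnitSegmentSymmetry g ∧ 1 / 2 ≤ (g c).re ∧ (g c).im = c.im := by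
    rcases le_or_gt (1 / 2) c.re with h | h
    · exact ⟨_root_.id, .id, h, rfl⟩
    · exact ⟨_, isUnitSegmentSymmetry_one_sub_conj, by simp; linarith, by simp⟩
  rcases le_or_gt 0 (g c).im with h | h
  · exact ⟨g, hg, hre, h⟩
  · exact ⟨_, isUnitSegmentSymmetry_conj.comp hg, by simpa using hre, by simp; linarith⟩

lemma exists_isUnitSegmentSymmetry_normalForm (c d : ℂ) :
    ∃ g C D, IsUnitSegmentSymmetry g ∧ Multiset.map g {c, d} = {C, D} ∧
      1 / 2 ≤ C.re ∧ 0 ≤ C.im ∧ foldKey D ≤ foldKey C := by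
  wlog h : foldKey d ≤ foldKey c generalizing c d
  · obtain ⟨g, C, D, hg, hmap, hC⟩ := this d c (le_of_not_ge h)
    exact ⟨g, C, D, hg, by rw [← hmap, Multiset.pair_comm], hC⟩
  obtain ⟨g, hg, hre, him⟩ := exists_isUnitSegmentSymmetry_mem_quadrant c
  exact ⟨g, g c, g d, hg, by simp, hre, him, by rwa [hg.foldKey_apply, hg.foldKey_apply]⟩

open Complex in
noncomputable def toUnitSegment (A B p : EuclideanSpace ℝ (Fin 2)) : ℂ :=
  (orthonormalBasisOneI.repr.symm p - orthonormalBasisOneI.repr.symm A) /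
    (orthonormalBasisOneI.repr.symm B - orthonormalBasisOneI.repr.symm A)

lemma dist_toUnitSegment (A B p q : EuclideanSpace ℝ (Fin 2)) :
    dist (toUnitSegment A B p) (toUnitSegment A B q) = dist p q / dist A B := by
  simp only [toUnitSegment, dist_eq_norm, ← sub_div, sub_sub_sub_cancel_right, norm_div,
    ← map_sub, LinearIsometryEquiv.norm_map, norm_sub_rev B A]

lemma map_toUnitSegment_pair {A B : EuclideanSpace ℝ (Fin 2)} (h : A ≠ B) :
    Multiset.map (toUnitSegment A B) {A, B} = {0, 1} := by
  have : Complex.orthonormalBasisOneI.repr.symm B - Complex.orthonormalBasisOneI.repr.symm A ≠ 0 :=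
    sub_ne_zero.2 (Complex.orthonormalBasisOneI.repr.symm.injective.ne h.symm)
  simp only [toUnitSegment, Multiset.insert_eq_cons, Multiset.map_cons, Multiset.map_singleton,
    sub_self, zero_div, div_self this]

lemma sq_add_sq_le_one_of_dist_le_one {C : EuclideanSpace ℝ (Fin 2)} (h : dist (pt 0 0) C ≤ 1) :
    C 0 ^ 2 + C 1 ^ 2 ≤ 1 := by
  have h0 : pt 0 0 = 0 := by ext i; fin_cases i <;> rfl
  rw [h0, dist_comm, dist_zero_right, EuclideanSpace.norm_eq, Real.sqrt_le_one] at h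
  simpa [Fin.sum_univ_two] using h

/-- Longest distance normal form for quadrilaterals: every 4-point multiset
with at least two distinct points is similar to {(0,0), (1,0), C, D} with
C ∈ S_C, all pairwise distances at most 1, and D quasilexicographically below C. -/
theorem stmt18 (P₁ P₂ P₃ P₄ : EuclideanSpace ℝ (Fin 2))
    (h : ¬ (P₁ = P₂ ∧ P₁ = P₃ ∧ P₁ = P₄)) :
    ∃ (C D : EuclideanSpace ℝ (Fin 2)) (f : EuclideanSpace ℝ (Fin 2) → EuclideanSpace ℝ (Fin 2)),
      IsPlaneSimilarity f ∧
      Multiset.map f {P₁, P₂, P₃, P₄} = ({pt 0 0, pt 1 0, C, D} : Multiset (EuclideanSpace ℝ (Fin 2))) ∧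
      0 ≤ C 1 ∧ 1/2 ≤ C 0 ∧ (C 0)^2 + (C 1)^2 ≤ 1 ∧
      dist (pt 0 0) (pt 1 0) ≤ 1 ∧ dist (pt 0 0) C ≤ 1 ∧ dist (pt 0 0) D ≤ 1 ∧
      dist (pt 1 0) C ≤ 1 ∧ dist (pt 1 0) D ≤ 1 ∧ dist C D ≤ 1 ∧
      |D 0 - 1/2| ≤ |C 0 - 1/2| ∧
      (|D 0 - 1/2| = |C 0 - 1/2| → |D 1| ≤ |C 1|) := by
  set s : Multiset (EuclideanSpace ℝ (Fin 2)) := {P₁, P₂, P₃, P₄}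
  have hs : ∃ x ∈ s, ∃ y ∈ s, x ≠ y := by
    by_contra! hall
    exact h ⟨hall _ (by simp [s]) _ (by simp [s]), hall _ (by simp [s]) _ (by simp [s]),
      hall _ (by simp [s]) _ (by simp [s])⟩
  obtain ⟨A, B, t, hst, hAB, hdiam⟩ := s.exists_eq_pair_add_forall_dist_le hs
  obtain ⟨X, Y, rfl⟩ : ∃ X Y, t = {X, Y} :=
    Multiset.card_eq_two.1 (by simpa [s] using congrArg Multiset.card hst)
  obtain ⟨g, C, D, hg, hgCD, hCre, hCim, hkey⟩ :=
    exists_isUnitSegmentSymmetry_normalForm (toUnitSegment A B X) (toUnitSegment A B Y)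
  let e := Complex.orthonormalBasisOneI.repr
  let f := e ∘ g ∘ toUnitSegment A B
  have hf : ∀ p q, dist (f p) (f q) = (dist A B)⁻¹ * dist p q := fun p q => by
    simp only [f, Function.comp_apply, LinearIsometryEquiv.dist_map, hg.isometry.dist_eq,
      dist_toUnitSegment, inv_mul_eq_div]
  have hmap : Multiset.map f s = {pt 0 0, pt 1 0, e C, e D} := by
    rw [hst, Multiset.map_add]
    simp only [f, ← Multiset.map_map, map_toUnitSegment_pair (dist_pos.1 hAB), hg.map_zero_one,
      show Multiset.map (toUnitSegment A B) {X, Y} = {_, _} from rfl, hgCD]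
    rfl
  have hle := Multiset.dist_le_of_mem_map hf (inv_nonneg.2 hAB.le) hdiam
  rw [hmap, inv_mul_cancel₀ hAB.ne'] at hle
  have hC : dist (pt 0 0) (e C) ≤ 1 := hle _ (by simp) _ (by simp)
  refine ⟨e C, e D, f, ⟨_, inv_pos.2 hAB, hf⟩, hmap, hCim, hCre,
    sq_add_sq_le_one_of_dist_le_one hC, hle _ (by simp) _ (by simp), hC,
    hle _ (by simp) _ (by simp), hle _ (by simp) _ (by simp), hle _ (by simp) _ (by simp),
    hle _ (by simp) _ (by simp), foldKey_le_foldKey_iff.1 hkey⟩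
end
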